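/- arXiv:0812.2588 — 3 statements merged into one kernel-verified Lean document; each statement's English description precedes it below -/
import Mathlib

section
/- Let n, m be natural numbers with n, m ≥ 1. The system of equations y = x + 2^(1/(2m)), x^(2n) + y^(2n) = 1, x^(2n-1) + y^(2n-1) = 0 has a real solution (x, y) if and only if n = m = 1, in which case the unique solution is (x, y) = (-√2/2, √2/2). -/
/-!
Odd powers are injective, so `x ^ (2n-1) + y ^ (2n-1) = 0` forces `y = -x`; with the line this gives
`x = -c/2` and `y = c/2` for `c = 2 ^ (1/(2m))`, and the curve equation becomes `2 (c/2) ^ (2n) = 1`,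
i.e. `2 ^ (n/m) = 2 ^ (2n-1)`. Hence `n = m (2n - 1) ≥ 2n - 1`, which leaves only `n = m = 1`.
-/

open Real

theorem eq_neg_of_pow_add_pow_eq_zero {R : Type*} [Ring R] [LinearOrder R] [IsStrictOrderedRing R]
    {k : ℕ} (hk : Odd k) {x y : R} (h : x ^ k + y ^ k = 0) : y = -x :=
  hk.pow_inj.mp <| by rw [hk.neg_pow]; exact eq_neg_of_add_eq_zero_right h

theorem rpow_one_div_two_mul_pow_two_mul {a : ℝ} (ha : 0 ≤ a) (n m : ℕ) :
    (a ^ (1 / (2 * (m : ℝ)))) ^ (2 * n) = a ^ ((n : ℝ) / m) := by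
  rw [← rpow_natCast, ← rpow_mul ha]
  congr 1
  push_cast
  ring

theorem Nat.eq_one_of_div_eq_two_mul_sub_one {n m : ℕ} (h : (n : ℝ) / m = 2 * n - 1) :
    n = 1 ∧ m = 1 := by
  obtain rfl | hm := m.eq_zero_or_pos
  · rw [Nat.cast_zero, div_zero] at h
    have : 2 * n = 1 := by exact_mod_cast (by linarith : (2 * n : ℝ) = 1)
    omega
  have hmR : (m : ℝ) ≠ 0 := by positivity
  have hnm : (n : ℤ) = m * (2 * n - 1) := by
    rw [div_eq_iff hmR] at h
    exact_mod_cast (by linarith : (n : ℝ) = m * (2 * n - 1))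
  have hn : 1 ≤ n := by
    by_contra! hn
    simp_all
  constructor <;> nlinarith

theorem two_rpow_one_div_two_mul_one : (2 : ℝ) ^ (1 / (2 * ((1 : ℕ) : ℝ))) = √2 := by
  rw [sqrt_eq_rpow]
  norm_num

theorem eq_one_of_tangent_system {n m : ℕ} {x y : ℝ}
    (hline : y = x + (2 : ℝ) ^ (1 / (2 * (m : ℝ))))
    (hcurve : x ^ (2 * n) + y ^ (2 * n) = 1) (hslope : x ^ (2 * n - 1) + y ^ (2 * n - 1) = 0) :
    n = 1 ∧ m = 1 ∧ x = -√2 / 2 ∧ y = √2 / 2 := by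
  obtain rfl | hn := n.eq_zero_or_pos
  · norm_num at hslope
  set c : ℝ := (2 : ℝ) ^ (1 / (2 * (m : ℝ))) with hc
  have hyx : y = -x := eq_neg_of_pow_add_pow_eq_zero ⟨n - 1, by omega⟩ hslope
  have hx : x = -(c / 2) := by linarith
  have hc_pow : c ^ (2 * n) = 2 ^ (2 * n - 1) := by
    have heven : Even (2 * n) := even_two_mul n
    rw [hyx, hx, neg_neg, heven.neg_pow, div_pow, ← two_mul] at hcurve
    have h2 : (2 : ℝ) ^ (2 * n) = 2 * 2 ^ (2 * n - 1) := by
      rw [← pow_succ', Nat.sub_add_cancel (by omega)]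
    field_simp at hcurve
    linarith
  have hexp : (n : ℝ) / m = 2 * n - 1 := by
    rw [hc, rpow_one_div_two_mul_pow_two_mul zero_le_two, ← rpow_natCast,
      rpow_right_inj zero_lt_two (by norm_num)] at hc_pow
    rw [hc_pow]
    push_cast [Nat.cast_sub (by omega : 1 ≤ 2 * n)]
    ring
  obtain ⟨rfl, rfl⟩ := Nat.eq_one_of_div_eq_two_mul_sub_one hexp
  rw [hc, two_rpow_one_div_two_mul_one] at hx
  exact ⟨rfl, rfl, by rw [hx]; ring, by rw [hyx, hx]; ring⟩

theorem tangent_system_sqrt_two :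
    √2 / 2 = -√2 / 2 + (2 : ℝ) ^ (1 / (2 * ((1 : ℕ) : ℝ))) ∧
      (-√2 / 2) ^ (2 * 1) + (√2 / 2) ^ (2 * 1) = 1 ∧
      (-√2 / 2) ^ (2 * 1 - 1) + (√2 / 2) ^ (2 * 1 - 1) = 0 := by
  have hsq : √2 ^ 2 = 2 := sq_sqrt zero_le_two
  refine ⟨?_, ?_, by ring⟩
  · rw [two_rpow_one_div_two_mul_one]; ring
  · linear_combination hsq / 2

theorem stmt2_general (n m : ℕ) :
    ((∃ x y : ℝ, y = x + (2:ℝ) ^ (1 / (2 * (m:ℝ))) ∧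
        x^(2*n) + y^(2*n) = 1 ∧ x^(2*n-1) + y^(2*n-1) = 0)
      ↔ (n = 1 ∧ m = 1)) ∧
    (n = 1 → m = 1 → ∀ x y : ℝ,
      (y = x + (2:ℝ) ^ (1 / (2 * (m:ℝ))) ∧
        x^(2*n) + y^(2*n) = 1 ∧ x^(2*n-1) + y^(2*n-1) = 0)
      ↔ (x = -Real.sqrt 2 / 2 ∧ y = Real.sqrt 2 / 2)) := by
  refine ⟨⟨fun ⟨x, y, hline, hcurve, hslope⟩ ↦ ?_, ?_⟩, ?_⟩
  · obtain ⟨hn, hm, -⟩ := eq_one_of_tangent_system hline hcurve hslope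
    exact ⟨hn, hm⟩
  · rintro ⟨rfl, rfl⟩
    exact ⟨_, _, tangent_system_sqrt_two⟩
  · rintro rfl rfl x y
    refine ⟨fun ⟨hline, hcurve, hslope⟩ ↦ ?_, ?_⟩
    · exact (eq_one_of_tangent_system hline hcurve hslope).2.2
    · rintro ⟨rfl, rfl⟩
      exact tangent_system_sqrt_two

theorem stmt2 (n m : ℕ) (hn : 1 ≤ n) (hm : 1 ≤ m) :
    ((∃ x y : ℝ, y = x + (2:ℝ) ^ (1 / (2 * (m:ℝ))) ∧
        x^(2*n) + y^(2*n) = 1 ∧ x^(2*n-1) + y^(2*n-1) = 0)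
      ↔ (n = 1 ∧ m = 1)) ∧
    (n = 1 → m = 1 → ∀ x y : ℝ,
      (y = x + (2:ℝ) ^ (1 / (2 * (m:ℝ))) ∧
        x^(2*n) + y^(2*n) = 1 ∧ x^(2*n-1) + y^(2*n-1) = 0)
      ↔ (x = -Real.sqrt 2 / 2 ∧ y = Real.sqrt 2 / 2)) :=
  stmt2_general n m
end

section
/- For every natural number n ≥ 1, the maximum of the function (x, y) ↦ y - x over the curve {(x,y) : x^(2n) + y^(2n) = 1} equals 2^((2n-1)/(2n)), and it is attained exactly at the point (-2^(-1/(2n)), 2^(-1/(2n))). -/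
/-!
Put `a = -x`, `b = y`. Convexity of `t ↦ t ^ (2n)` gives
`((y - x) / 2) ^ (2n) ≤ ((-x) ^ (2n) + y ^ (2n)) / 2 = 1 / 2`, hence `y - x ≤ 2 c` with
`c = 2 ^ (-1/(2n))` the nonnegative root of `c ^ (2n) = 1 / 2`, and `2 c = 2 ^ ((2n-1)/(2n))`.
Equality forces equality in the midpoint inequality, so strict convexity gives `-x = y`.
-/

open Real

variable {m : ℕ}

lemma Even.add_div_two_pow_le (hm : Even m) (a b : ℝ) :
    ((a + b) / 2) ^ m ≤ (a ^ m + b ^ m) / 2 := by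
  have h := hm.convexOn_pow.2 (Set.mem_univ a) (Set.mem_univ b)
    (by norm_num : (0 : ℝ) ≤ 1 / 2) (by norm_num : (0 : ℝ) ≤ 1 / 2) (by norm_num)
  simp only [smul_eq_mul] at h
  rwa [show 1 / 2 * a + 1 / 2 * b = (a + b) / 2 by ring, ← mul_add, one_div_mul_eq_div] at h

lemma Even.eq_of_add_div_two_pow_eq (hm : Even m) (hm0 : m ≠ 0) {a b : ℝ}
    (h : ((a + b) / 2) ^ m = (a ^ m + b ^ m) / 2) : a = b := by
  by_contra hab
  have hs := (hm.strictConvexOn_pow hm0).2 (Set.mem_univ a) (Set.mem_univ b) hab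
    (by norm_num : (0 : ℝ) < 1 / 2) (by norm_num : (0 : ℝ) < 1 / 2) (by norm_num)
  simp only [smul_eq_mul] at hs
  rw [show 1 / 2 * a + 1 / 2 * b = (a + b) / 2 by ring] at hs
  linarith

lemma Even.sub_le_of_pow_add_pow_eq_one (hm : Even m) {c : ℝ} (hc : 0 ≤ c)
    (hcm : c ^ m = 1 / 2) {x y : ℝ} (hxy : x ^ m + y ^ m = 1) : y - x ≤ 2 * c := by
  have hm0 : m ≠ 0 := by rintro rfl; norm_num at hcm
  have hmid : |(y - x) / 2| ^ m ≤ c ^ m := by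
    have h := hm.add_div_two_pow_le (-x) y
    rwa [hm.neg_pow, hxy, ← hcm, neg_add_eq_sub, ← hm.pow_abs] at h
  have habs := (pow_le_pow_iff_left₀ (abs_nonneg _) hc hm0).1 hmid
  linarith [le_abs_self ((y - x) / 2)]

lemma Even.eq_of_pow_add_pow_eq_one_of_sub_eq (hm : Even m) {c : ℝ} (hcm : c ^ m = 1 / 2)
    {x y : ℝ} (hxy : x ^ m + y ^ m = 1) (heq : y - x = 2 * c) : x = -c ∧ y = c := by
  have hm0 : m ≠ 0 := by rintro rfl; norm_num at hcm
  have hmid : ((-x + y) / 2) ^ m = ((-x) ^ m + y ^ m) / 2 := by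
    rw [hm.neg_pow, hxy, show (-x + y) / 2 = c by linarith, hcm]
  have hneg := hm.eq_of_add_div_two_pow_eq hm0 hmid
  constructor <;> linarith

lemma Real.rpow_neg_one_div_pow {b : ℝ} (hb : 0 ≤ b) (hm0 : m ≠ 0) :
    (b ^ (-(1 / (m : ℝ)))) ^ m = b⁻¹ := by
  rw [← rpow_natCast, ← rpow_mul hb, neg_mul, one_div_mul_cancel (by exact_mod_cast hm0),
    rpow_neg_one]

lemma Real.rpow_sub_one_div_eq_mul_rpow_neg_one_div {b p : ℝ} (hb : 0 < b) (hp : p ≠ 0) :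
    b ^ ((p - 1) / p) = b * b ^ (-(1 / p)) := by
  rw [show (p - 1) / p = 1 + -(1 / p) by field_simp; ring, rpow_add hb, rpow_one]

theorem stmt4 (n : ℕ) (hn : 1 ≤ n) :
    (∀ x y : ℝ, x^(2*n) + y^(2*n) = 1 →
      y - x ≤ (2:ℝ) ^ ((2*(n:ℝ) - 1) / (2*(n:ℝ)))) ∧
    ((-(2:ℝ) ^ (-(1 / (2*(n:ℝ)))))^(2*n) + ((2:ℝ) ^ (-(1 / (2*(n:ℝ)))))^(2*n) = 1) ∧
    (((2:ℝ) ^ (-(1 / (2*(n:ℝ))))) - (-(2:ℝ) ^ (-(1 / (2*(n:ℝ)))))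
      = (2:ℝ) ^ ((2*(n:ℝ) - 1) / (2*(n:ℝ)))) ∧
    (∀ x y : ℝ, x^(2*n) + y^(2*n) = 1 →
      y - x = (2:ℝ) ^ ((2*(n:ℝ) - 1) / (2*(n:ℝ))) →
      x = -(2:ℝ) ^ (-(1 / (2*(n:ℝ)))) ∧ y = (2:ℝ) ^ (-(1 / (2*(n:ℝ))))) := by
  have hm : Even (2 * n) := even_two_mul n
  have hm0 : 2 * n ≠ 0 := by omega
  have hcast : 2 * (n : ℝ) = ((2 * n : ℕ) : ℝ) := by push_cast; rfl
  rw [hcast, rpow_sub_one_div_eq_mul_rpow_neg_one_div two_pos (by exact_mod_cast hm0)]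
  set c := (2 : ℝ) ^ (-(1 / ((2 * n : ℕ) : ℝ)))
  have hcm : c ^ (2 * n) = 1 / 2 := by rw [rpow_neg_one_div_pow zero_le_two hm0, one_div]
  refine ⟨fun x y hxy => hm.sub_le_of_pow_add_pow_eq_one (by positivity) hcm hxy,
    by rw [hm.neg_pow, hcm]; norm_num, by ring,
    fun x y hxy heq => hm.eq_of_pow_add_pow_eq_one_of_sub_eq hcm hxy heq⟩
end

section
/- Let m ≥ 2 be a natural number. There is no point (x, y) on the unit circle x² + y² = 1 at which the tangent line to the unit circle passes through both (0, 2^(1/(2m))) and (-2^(1/(2m)), 0). Consequently the segment from (0, 2^(1/(2m))) to (-2^(1/(2m)), 0) is not tangent to the unit circle. -/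
lemma sq_eq_two_of_tangent_through_axis_points {a b c : ℝ} (hab : a ^ 2 + b ^ 2 = 1)
    (hb : b * c = 1) (ha : a * -c = 1) : c ^ 2 = 2 := by
  -- c² = c²(a² + b²) = (ac)² + (bc)² = 2
  linear_combination (-c ^ 2) * hab + (b * c + 1) * hb + (-(a * c) + 1) * ha

lemma sq_rpow_one_div_two_mul_lt {x y : ℝ} (hx : 1 < x) (hy : 1 < y) :
    (x ^ (1 / (2 * y))) ^ 2 < x := by
  rw [← Real.rpow_mul_natCast (by positivity)]
  refine Real.rpow_lt_self_of_one_lt hx ?_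
  rw [Nat.cast_ofNat, one_div_mul_eq_div, div_lt_one (by positivity)]
  linarith

theorem stmt15 (m : ℕ) (hm : 2 ≤ m) :
    ¬ ∃ a b : ℝ, a^2 + b^2 = 1 ∧
      a * 0 + b * ((2:ℝ) ^ (1 / (2 * (m:ℝ)))) = 1 ∧
      a * (-(2:ℝ) ^ (1 / (2 * (m:ℝ)))) + b * 0 = 1 := by
  rintro ⟨a, b, hab, hb, ha⟩
  have hm' : (1 : ℝ) < m := by exact_mod_cast hm
  rw [mul_zero, zero_add] at hb
  rw [mul_zero, add_zero] at ha
  have hsq := sq_eq_two_of_tangent_through_axis_points hab hb ha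
  exact (sq_rpow_one_div_two_mul_lt one_lt_two hm').ne hsq
end
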